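/- arXiv:2509.00121 — 3 statements merged into one kernel-verified Lean document; each statement's English description precedes it below -/
import Mathlib

section
/- For every integer m ≥ 1 and for n = 4m + 1 as well as for n = 4m + 2, the fractions 2m/(4m+1) and (2m+1)/(4m) both belong to the Farey sequence of order n, exactly m + 2 fractions of the Farey sequence of order n lie strictly between them, and they are not similarly ordered, i.e. ((2m+1) − 2m)·(4m − (4m+1)) < 0. -/
/-- The Farey fractions of order `n`: the rationals in `[0,1]` whose (reduced) denominator
is at most `n`. -/
def fareySet (n : ℕ) : Finset ℚ :=
  ((Finset.range (n + 1) ×ˢ Finset.range (n + 1)).image fun p => (p.1 : ℚ) / (p.2 : ℚ)).filter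
    fun q => 0 ≤ q ∧ q ≤ 1 ∧ q.den ≤ n

/-- The Farey sequence of order `n`: the Farey fractions of order `n` listed in
increasing order. -/
def fareyList (n : ℕ) : List ℚ := (fareySet n).sort (· ≤ ·)

/-- Two reduced fractions `q = a/b` and `q' = a'/b'` are similarly ordered if
`(a' - a) * (b' - b) ≥ 0`. -/
def SimilarlyOrdered (q q' : ℚ) : Prop :=
  0 ≤ (q'.num - q.num) * ((q'.den : ℤ) - (q.den : ℤ))

lemma mem_fareySet_iff {n : ℕ} {q : ℚ} :
    q ∈ fareySet n ↔ 0 ≤ q ∧ q ≤ 1 ∧ q.den ≤ n := by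
  constructor
  · intro h; exact (Finset.mem_filter.mp h).2
  · rintro ⟨h0, h1, hd⟩
    refine Finset.mem_filter.mpr ⟨?_, h0, h1, hd⟩
    refine Finset.mem_image.mpr ⟨(q.num.toNat, q.den), ?_, ?_⟩
    · have hden : (0:ℚ) < (q.den : ℚ) := by exact_mod_cast q.pos
      have hq : (q.num : ℚ) / (q.den : ℚ) = q := Rat.num_div_den q
      have hnum : (q.num : ℚ) ≤ (q.den : ℚ) := by
        rw [← hq] at h1
        exact (div_le_one hden).mp h1
      have hnum' : q.num ≤ (q.den : ℤ) := by exact_mod_cast hnum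
      refine Finset.mem_product.mpr ⟨Finset.mem_range.mpr ?_, Finset.mem_range.mpr ?_⟩ <;> omega
    · have hq : (q.num : ℚ) / (q.den : ℚ) = q := Rat.num_div_den q
      have h0' : 0 ≤ q.num := Rat.num_nonneg.mpr h0
      have hcast : ((q.num.toNat : ℕ) : ℚ) = (q.num : ℚ) := by
        exact_mod_cast congrArg (fun z : ℤ => (z : ℚ)) (Int.toNat_of_nonneg h0')
      show ((q.num.toNat : ℕ) : ℚ) / ((q.den : ℕ) : ℚ) = q
      rw [hcast, hq]

lemma ratdiv (a b : ℤ) (hb : 0 < b) (h : Int.gcd a b = 1) :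
    ((a:ℚ)/b).num = a ∧ (((a:ℚ)/b).den : ℤ) = b :=
  ⟨Rat.num_div_eq_of_coprime hb h, Rat.den_div_eq_of_coprime hb h⟩

set_option maxHeartbeats 1600000 in
/-- For every `m ≥ 1` and `n = 4m + 1` or `n = 4m + 2`, the fractions `2m/(4m+1)` and
`(2m+1)/(4m)` both belong to the Farey sequence of order `n`, exactly `m + 2` Farey
fractions of order `n` lie strictly between them, and they are not similarly ordered. -/
theorem farey_upper_bound_mod_one_two (m : ℕ) (hm : 1 ≤ m) (n : ℕ)
    (hn : n = 4 * m + 1 ∨ n = 4 * m + 2) :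
    (2 * (m : ℚ)) / (4 * m + 1) ∈ fareySet n ∧
    (2 * (m : ℚ) + 1) / (4 * m) ∈ fareySet n ∧
    ((fareySet n).filter fun q =>
        (2 * (m : ℚ)) / (4 * m + 1) < q ∧ q < (2 * (m : ℚ) + 1) / (4 * m)).card = m + 2 ∧
    ((2 * (m : ℤ) + 1) - 2 * (m : ℤ)) * (4 * (m : ℤ) - (4 * (m : ℤ) + 1)) < 0 := by
  have hnlb : 4 * m + 1 ≤ n := by rcases hn with rfl | rfl <;> omega
  have hnub : n ≤ 4 * m + 2 := by rcases hn with rfl | rfl <;> omega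
  have hmq : (1:ℚ) ≤ (m:ℚ) := by exact_mod_cast hm
  have hmz : (1:ℤ) ≤ (m:ℤ) := by exact_mod_cast hm
  -- denominators positive
  have hd1 : (0:ℚ) < 4 * (m:ℚ) + 1 := by linarith
  have hd2 : (0:ℚ) < 4 * (m:ℚ) := by linarith
  -- the left endpoint
  have hcopL : Int.gcd (2 * (m:ℤ)) (4 * (m:ℤ) + 1) = 1 := by
    rw [← Int.isCoprime_iff_gcd_eq_one]
    exact ⟨-2, 1, by ring⟩
  have hL := ratdiv (2 * (m:ℤ)) (4 * (m:ℤ) + 1) (by linarith) hcopL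
  have hLcast : (((2 * (m:ℤ) : ℤ) : ℚ)) / (((4 * (m:ℤ) + 1 : ℤ) : ℚ)) = 2 * (m:ℚ) / (4 * m + 1) := by
    push_cast; ring
  have hLden : ((2 * (m:ℚ)) / (4 * m + 1)).den = 4 * m + 1 := by
    rw [← hLcast] at *
    exact_mod_cast hL.2
  have hLnum : ((2 * (m:ℚ)) / (4 * m + 1)).num = 2 * m := by
    rw [← hLcast]; exact hL.1
  have hmemL : (2 * (m : ℚ)) / (4 * m + 1) ∈ fareySet n := by
    rw [mem_fareySet_iff]
    refine ⟨by positivity, ?_, by omega⟩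
    rw [div_le_one hd1]; linarith
  -- the right endpoint
  have hcopR : Int.gcd (2 * (m:ℤ) + 1) (4 * (m:ℤ)) = 1 := by
    rw [← Int.isCoprime_iff_gcd_eq_one]
    exact ⟨2 * (m:ℤ) + 1, -((m:ℤ) + 1), by ring⟩
  have hR := ratdiv (2 * (m:ℤ) + 1) (4 * (m:ℤ)) (by linarith) hcopR
  have hRcast : (((2 * (m:ℤ) + 1 : ℤ) : ℚ)) / (((4 * (m:ℤ) : ℤ) : ℚ)) = (2 * (m:ℚ) + 1) / (4 * m) := by
    push_cast; ring
  have hmemR : (2 * (m : ℚ) + 1) / (4 * m) ∈ fareySet n := by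
    rw [mem_fareySet_iff]
    refine ⟨by positivity, ?_, ?_⟩
    · rw [div_le_one hd2]; linarith
    · have : (((2 * (m:ℚ) + 1) / (4 * m)).den : ℤ) = 4 * m := by rw [← hRcast]; exact hR.2
      omega
  refine ⟨hmemL, hmemR, ?_, by nlinarith⟩
  -- the middle count
  have hset : ((fareySet n).filter fun q =>
        (2 * (m : ℚ)) / (4 * m + 1) < q ∧ q < (2 * (m : ℚ) + 1) / (4 * m)) =
      insert ((1:ℚ)/2) ((Finset.Icc m (2*m)).image fun k : ℕ => ((k:ℚ)+1)/(2*(k:ℚ)+1)) := by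
    ext q
    rw [Finset.mem_filter, mem_fareySet_iff, Finset.mem_insert, Finset.mem_image]
    constructor
    · rintro ⟨⟨hq0, hq1, hden⟩, hlt1, hlt2⟩
      have hbq : (0:ℚ) < (q.den : ℚ) := by exact_mod_cast q.pos
      have hb : (0:ℤ) < (q.den : ℤ) := by exact_mod_cast q.pos
      have hq : (q.num : ℚ) / (q.den : ℚ) = q := Rat.num_div_den q
      rw [← hq] at hlt1 hlt2
      have h1 : 2 * (m:ℤ) * q.den < q.num * (4 * m + 1) := by
        have := (div_lt_div_iff₀ hd1 hbq).mp hlt1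
        exact_mod_cast this
      have h2 : q.num * (4 * m) < (2 * (m:ℤ) + 1) * q.den := by
        have := (div_lt_div_iff₀ hbq hd2).mp hlt2
        exact_mod_cast this
      have hbn : (q.den : ℤ) ≤ 4 * m + 2 := by omega
      have hcop : Nat.gcd q.num.natAbs q.den = 1 := q.reduced
      have ha : 0 < q.num := by
        by_contra hcon
        push_neg at hcon
        have hx : q.num * (4 * (m:ℤ) + 1) ≤ 0 := mul_nonpos_of_nonpos_of_nonneg hcon (by linarith)
        have hy : (0:ℤ) < 2 * m * q.den := mul_pos (by linarith) hb
        linarith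
      have htlb : 0 ≤ 2 * q.num - (q.den : ℤ) := by
        by_contra hcon
        push_neg at hcon
        have h2a : 2 * q.num + 1 ≤ (q.den : ℤ) := by omega
        have key : 2 * (m:ℤ) * (2 * q.num + 1) ≤ 2 * m * q.den :=
          mul_le_mul_of_nonneg_left h2a (by linarith)
        have hA : 2 * (m:ℤ) < q.num := by nlinarith
        omega
      have htub : 2 * q.num - (q.den : ℤ) ≤ 2 := by
        by_contra hcon
        push_neg at hcon
        have h3 : 3 ≤ 2 * q.num - (q.den : ℤ) := by omega
        have key : 2 * (m:ℤ) * 3 ≤ 2 * m * (2 * q.num - q.den) :=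
          mul_le_mul_of_nonneg_left h3 (by linarith)
        nlinarith
      interval_cases ht : (2 * q.num - (q.den : ℤ))
      · -- q = 1/2
        left
        have hnum1 : q.num = 1 := by
          have hdvd : q.num.natAbs ∣ Nat.gcd q.num.natAbs q.den :=
            Nat.dvd_gcd dvd_rfl ⟨2, by omega⟩
          rw [hcop] at hdvd
          have := Nat.dvd_one.mp hdvd
          omega
        have hden2 : q.den = 2 := by omega
        rw [← hq, hnum1, hden2]; norm_num
      · -- q = (k+1)/(2k+1)
        right
        obtain ⟨k, hk⟩ : ∃ k : ℕ, q.num = (k:ℤ) + 1 := ⟨(q.num - 1).toNat, by omega⟩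
        have hkub : k ≤ 2 * m := by omega
        have hklb : m ≤ k := by nlinarith
        refine ⟨k, Finset.mem_Icc.mpr ⟨hklb, hkub⟩, ?_⟩
        have hdk : q.den = 2 * k + 1 := by omega
        rw [← hq, hk, hdk]
        push_cast; ring
      · -- impossible: both even
        exfalso
        have hB : 4 * (m:ℤ) < (q.den : ℤ) := by nlinarith
        have hden' : q.den = 4 * m + 2 := by omega
        have hnum' : q.num.natAbs = 2 * m + 2 := by omega
        have hdvd : 2 ∣ Nat.gcd q.num.natAbs q.den :=
          Nat.dvd_gcd ⟨m + 1, by omega⟩ ⟨2 * m + 1, by omega⟩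
        rw [hcop] at hdvd
        omega
    · rintro (rfl | ⟨k, hk, rfl⟩)
      · refine ⟨⟨by norm_num, by norm_num, ?_⟩, ?_, ?_⟩
        · have : ((1:ℚ)/2).den = 2 := by norm_num
          omega
        · rw [div_lt_div_iff₀ hd1 (by norm_num)]; linarith
        · rw [div_lt_div_iff₀ (by norm_num) hd2]; linarith
      · rw [Finset.mem_Icc] at hk
        obtain ⟨hk1, hk2⟩ := hk
        have hk1q : (m:ℚ) ≤ (k:ℚ) := by exact_mod_cast hk1
        have hk2q : (k:ℚ) ≤ 2*(m:ℚ) := by exact_mod_cast hk2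
        have hdk : (0:ℚ) < 2*(k:ℚ)+1 := by linarith
        have hcopk : Int.gcd ((k:ℤ) + 1) (2 * (k:ℤ) + 1) = 1 := by
          rw [← Int.isCoprime_iff_gcd_eq_one]
          exact ⟨2, -1, by ring⟩
        have hKd := (ratdiv ((k:ℤ)+1) (2*(k:ℤ)+1) (by positivity) hcopk).2
        have hKcast : ((((k:ℤ)+1 : ℤ) : ℚ)) / (((2*(k:ℤ)+1 : ℤ) : ℚ)) = ((k:ℚ)+1)/(2*(k:ℚ)+1) := by
          push_cast; ring
        rw [hKcast] at hKd
        refine ⟨⟨by positivity, ?_, ?_⟩, ?_, ?_⟩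
        · rw [div_le_one hdk]; linarith
        · omega
        · rw [div_lt_div_iff₀ hd1 hdk]; nlinarith
        · rw [div_lt_div_iff₀ hdk hd2]; nlinarith
  rw [hset]
  have hnotmem : (1:ℚ)/2 ∉ (Finset.Icc m (2*m)).image fun k : ℕ => ((k:ℚ)+1)/(2*(k:ℚ)+1) := by
    rw [Finset.mem_image]
    rintro ⟨k, hk, hke⟩
    have hcopk : Int.gcd ((k:ℤ) + 1) (2 * (k:ℤ) + 1) = 1 := by
      rw [← Int.isCoprime_iff_gcd_eq_one]
      exact ⟨2, -1, by ring⟩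
    have hKd := (ratdiv ((k:ℤ)+1) (2*(k:ℤ)+1) (by positivity) hcopk).2
    have hKcast : ((((k:ℤ)+1 : ℤ) : ℚ)) / (((2*(k:ℤ)+1 : ℤ) : ℚ)) = ((k:ℚ)+1)/(2*(k:ℚ)+1) := by
      push_cast; ring
    rw [hKcast, hke] at hKd
    have : ((1:ℚ)/2).den = 2 := by norm_num
    omega
  rw [Finset.card_insert_of_notMem hnotmem, Finset.card_image_of_injOn, Nat.card_Icc]
  · omega
  · intro a _ b _ hab
    have hca : Int.gcd ((a:ℤ) + 1) (2 * (a:ℤ) + 1) = 1 := by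
      rw [← Int.isCoprime_iff_gcd_eq_one]; exact ⟨2, -1, by ring⟩
    have hcb : Int.gcd ((b:ℤ) + 1) (2 * (b:ℤ) + 1) = 1 := by
      rw [← Int.isCoprime_iff_gcd_eq_one]; exact ⟨2, -1, by ring⟩
    have hda := (ratdiv ((a:ℤ)+1) (2*(a:ℤ)+1) (by positivity) hca).2
    have hdb := (ratdiv ((b:ℤ)+1) (2*(b:ℤ)+1) (by positivity) hcb).2
    have hac : ((((a:ℤ)+1 : ℤ) : ℚ)) / (((2*(a:ℤ)+1 : ℤ) : ℚ)) = ((a:ℚ)+1)/(2*(a:ℚ)+1) := by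
      push_cast; ring
    have hbc : ((((b:ℤ)+1 : ℤ) : ℚ)) / (((2*(b:ℤ)+1 : ℤ) : ℚ)) = ((b:ℚ)+1)/(2*(b:ℚ)+1) := by
      push_cast; ring
    have hab' : ((a:ℚ)+1)/(2*(a:ℚ)+1) = ((b:ℚ)+1)/(2*(b:ℚ)+1) := hab
    rw [hac] at hda; rw [hbc] at hdb
    rw [hab'] at hda
    omega
end

section
/- Let b ≥ 2 be an integer and let p/q < a/b < r/s be three consecutive fractions in the Farey sequence of order b (so that qa − pb = 1 and br − as = 1). Then for all integers e ≥ 0 and e' ≥ 0, the fractions (p + ea)/(q + eb) and (r + e'a)/(s + e'b) are similarly ordered; that is, ((r + e'a) − (p + ea)) · ((s + e'b) − (q + eb)) ≥ 0. -/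
lemma mem_fareySet {n : ℕ} {x : ℚ} : x ∈ fareySet n ↔ 0 ≤ x ∧ x ≤ 1 ∧ x.den ≤ n := by
  refine ⟨fun hx => (Finset.mem_filter.mp hx).2, fun ⟨h0, h1, hd⟩ => ?_⟩
  refine Finset.mem_filter.mpr ⟨Finset.mem_image.mpr ⟨(x.num.toNat, x.den), ?_, ?_⟩, h0, h1, hd⟩
  · have hnum : 0 ≤ x.num := Rat.num_nonneg.mpr h0
    have hnd : x.num ≤ x.den := Rat.num_le_denom_iff.mpr h1
    simp only [Finset.mem_product, Finset.mem_range]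
    omega
  · have hnum : ((x.num.toNat : ℕ) : ℚ) = x.num := by
      exact_mod_cast Int.toNat_of_nonneg (Rat.num_nonneg.mpr h0)
    simp only [hnum, Rat.num_div_den]

/-- The candidate successor of `u` in the Farey sequence of order `n`, from Bézout's
identity for `u.num, u.den`, shifted so that its denominator lands in `(n - u.den, n]`. -/
lemma exists_unimodular_of_den_le {n : ℕ} (u : ℚ) (hu : u.den ≤ n) :
    ∃ w : ℚ, w.num * u.den - u.num * w.den = 1 ∧ (n : ℤ) < u.den + w.den ∧ w.den ≤ n := by
  obtain ⟨α, β, hαβ⟩ := Rat.isCoprime_num_den u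
  set p := u.num
  set q : ℤ := (u.den : ℤ)
  have hq : 0 < q := Int.natCast_pos.mpr u.pos
  set t := ((n : ℤ) + α) / q
  set r := β + t * p
  set s := -α + t * q
  have hrs : r * q - p * s = 1 := by linear_combination hαβ
  have hs : s = n - ((n : ℤ) + α) % q := by rw [Int.emod_def]; ring
  have hmod₀ := Int.emod_nonneg ((n : ℤ) + α) hq.ne'
  have hmod₁ := Int.emod_lt_of_pos ((n : ℤ) + α) hq
  have hs₀ : 0 < s := by omega
  have hcop : Nat.Coprime r.natAbs s.natAbs :=
    Int.isCoprime_iff_gcd_eq_one.mp ⟨q, -p, by linear_combination hrs⟩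
  have hnum : ((r : ℚ) / s).num = r := Rat.num_div_eq_of_coprime hs₀ hcop
  have hden : (((r : ℚ) / s).den : ℤ) = s := Rat.den_div_eq_of_coprime hs₀ hcop
  refine ⟨r / s, by rw [hnum, hden]; exact hrs, by omega, by omega⟩

lemma den_add_den_le_of_unimodular {u w x : ℚ} (h : w.num * u.den - u.num * w.den = 1)
    (hux : u < x) (hxw : x < w) : (u.den + w.den : ℤ) ≤ x.den := by
  rw [Rat.lt_iff] at hux hxw
  have hu : (0 : ℤ) < u.den := by exact_mod_cast u.pos
  have hw : (0 : ℤ) < w.den := by exact_mod_cast w.pos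
  have hx : (x.den : ℤ) =
      u.den * (w.num * x.den - x.num * w.den) + w.den * (x.num * u.den - u.num * x.den) := by
    linear_combination (-(x.den : ℤ)) * h
  nlinarith

lemma unimodular_of_mem_fareySet {n : ℕ} {u v : ℚ} (hu : u ∈ fareySet n) (hv : v ∈ fareySet n)
    (huv : u < v) (hadj : ∀ w ∈ fareySet n, ¬(u < w ∧ w < v)) :
    v.num * u.den - u.num * v.den = 1 := by
  obtain ⟨hu₀, -, hun⟩ := mem_fareySet.mp hu
  obtain ⟨-, hv₁, hvn⟩ := mem_fareySet.mp hv
  obtain ⟨w, hwu, hnw, hwn⟩ := exists_unimodular_of_den_le u hun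
  have huw : u < w := by rw [Rat.lt_iff]; linarith
  rcases lt_trichotomy v w with hvw | rfl | hwv
  · have := den_add_den_le_of_unimodular hwu huv hvw
    omega
  · exact hwu
  · exact absurd ⟨huw, hwv⟩ <| hadj w <|
      mem_fareySet.mpr ⟨hu₀.trans huw.le, hwv.le.trans hv₁, hwn⟩

lemma fareyList_get_mem {n : ℕ} (i : Fin (fareyList n).length) :
    (fareyList n).get i ∈ fareySet n :=
  (Finset.mem_sort _).mp (List.get_mem _ _)

lemma fareyList_unimodular {n i : ℕ} (hi : i + 1 < (fareyList n).length) :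
    ((fareyList n).get ⟨i + 1, hi⟩).num * ((fareyList n).get ⟨i, by omega⟩).den
      - ((fareyList n).get ⟨i, by omega⟩).num * ((fareyList n).get ⟨i + 1, hi⟩).den = 1 := by
  have hmono : StrictMono (fareyList n).get := (Finset.sortedLT_sort _).strictMono_get
  refine unimodular_of_mem_fareySet (fareyList_get_mem _) (fareyList_get_mem _)
    (hmono (by simp [Fin.lt_def])) ?_
  rintro w hw ⟨hlo, hhi⟩
  obtain ⟨k, rfl⟩ := List.mem_iff_get.mp (show w ∈ fareyList n from (Finset.mem_sort _).mpr hw)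
  have := hmono.lt_iff_lt.mp hlo
  have := hmono.lt_iff_lt.mp hhi
  simp only [Fin.lt_def] at *
  omega

lemma similarlyOrdered_of_unimodular {u v : ℚ} (hu : 0 ≤ u)
    (h : v.num * u.den - u.num * v.den = 1) : SimilarlyOrdered u v := by
  have hP : 0 ≤ u.num := Rat.num_nonneg.mpr hu
  have hQ : (1 : ℤ) ≤ u.den := by exact_mod_cast u.pos
  have hS : (1 : ℤ) ≤ v.den := by exact_mod_cast v.pos
  unfold SimilarlyOrdered
  rcases le_or_gt v.num u.num with hRP | hPR
  · rcases le_or_gt (v.den : ℤ) u.den with hSQ | hQS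
    · exact mul_nonneg_of_nonpos_of_nonpos (by linarith) (by linarith)
    · nlinarith
  · rcases le_or_gt (u.den : ℤ) v.den with hQS | hSQ
    · exact mul_nonneg (by linarith) (by linarith)
    · nlinarith

/-- The middle term of three consecutive Farey fractions, with denominator `b` equal
to the order, is the mediant of its neighbours. -/
lemma eq_mediant_of_unimodular {P Q R S a b : ℤ} (hab : IsCoprime a b) (hb : 2 ≤ b)
    (hQ : 0 < Q) (hS : 0 < S) (hQb : Q ≤ b) (hSb : S ≤ b)
    (h₁ : a * Q - P * b = 1) (h₂ : R * b - a * S = 1) : a = P + R ∧ b = Q + S := by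
  have hcross : b * (P + R) = a * (Q + S) := by linear_combination h₂ - h₁
  obtain ⟨c, hc⟩ : b ∣ Q + S := hab.symm.dvd_of_dvd_mul_left ⟨P + R, hcross.symm⟩
  -- `Q = b` would give `b * (a - P) = 1`.
  have hQb' : Q < b := by
    refine hQb.lt_of_ne fun hQeq => ?_
    have hunit : b * (a - P) = 1 := by rw [hQeq] at h₁; linear_combination h₁
    have := Int.eq_one_of_mul_eq_one_right (by omega) hunit
    omega
  have hc₁ : c = 1 := by
    have : 0 < c := by nlinarith
    have : c < 2 := by nlinarith
    omega
  subst hc₁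
  refine ⟨?_, by omega⟩
  have : b * a = b * (P + R) := by rw [hcross]; linear_combination (-a) * hc
  exact mul_left_cancel₀ (by omega) this

lemma sub_add_mul_mul_sub_add_mul_nonneg {P Q R S : ℤ} (hP : 0 ≤ P) (hQ : 0 ≤ Q)
    (hR : 0 ≤ R) (hS : 0 ≤ S) (h : 0 ≤ (R - P) * (S - Q)) (k : ℤ) :
    0 ≤ (R - P + k * (P + R)) * (S - Q + k * (Q + S)) := by
  rcases lt_trichotomy k 0 with hk | rfl | hk
  · have h₁ := mul_nonneg (show 0 ≤ -1 - k by omega) (add_nonneg hP hR)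
    have h₂ := mul_nonneg (show 0 ≤ -1 - k by omega) (add_nonneg hQ hS)
    exact mul_nonneg_of_nonpos_of_nonpos (by linarith) (by linarith)
  · simpa using h
  · have h₁ := mul_nonneg (show 0 ≤ k - 1 by omega) (add_nonneg hP hR)
    have h₂ := mul_nonneg (show 0 ≤ k - 1 by omega) (add_nonneg hQ hS)
    exact mul_nonneg (by linarith) (by linarith)

/-- Let `b ≥ 2` and let `p/q < a/b < r/s` be three consecutive fractions in the Farey
sequence of order `b` (the middle one having denominator exactly `b`). Then for all
integers `e, e' ≥ 0` the fractions `(p + ea)/(q + eb)` and `(r + e'a)/(s + e'b)` are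
similarly ordered: `((r + e'a) − (p + ea)) · ((s + e'b) − (q + eb)) ≥ 0`. -/
theorem farey_segment_similarly_ordered (b : ℕ) (hb : 2 ≤ b) (j : ℕ)
    (hj : j + 2 < (fareyList b).length)
    (hden : ((fareyList b).get ⟨j + 1, by omega⟩).den = b) (e e' : ℕ) :
    0 ≤ ((((fareyList b).get ⟨j + 2, hj⟩).num
            + (e' : ℤ) * ((fareyList b).get ⟨j + 1, by omega⟩).num)
          - (((fareyList b).get ⟨j, by omega⟩).num
            + (e : ℤ) * ((fareyList b).get ⟨j + 1, by omega⟩).num))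
        * (((((fareyList b).get ⟨j + 2, hj⟩).den : ℤ) + (e' : ℤ) * (b : ℤ))
          - ((((fareyList b).get ⟨j, by omega⟩).den : ℤ) + (e : ℤ) * (b : ℤ))) := by
  set u := (fareyList b).get ⟨j, by omega⟩
  set m := (fareyList b).get ⟨j + 1, by omega⟩
  set v := (fareyList b).get ⟨j + 2, hj⟩
  obtain ⟨hu₀, -, hub⟩ := mem_fareySet.mp (fareyList_get_mem (n := b) ⟨j, by omega⟩)
  obtain ⟨hv₀, -, hvb⟩ := mem_fareySet.mp (fareyList_get_mem (n := b) ⟨j + 2, hj⟩)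
  have h₁ : m.num * u.den - u.num * m.den = 1 := fareyList_unimodular (by omega)
  have h₂ : v.num * m.den - m.num * v.den = 1 := fareyList_unimodular (i := j + 1) hj
  have hm : IsCoprime m.num b := hden ▸ Rat.isCoprime_num_den m
  rw [hden] at h₁ h₂
  obtain ⟨hnum, hsum⟩ := eq_mediant_of_unimodular hm (by exact_mod_cast hb)
    (by exact_mod_cast u.pos) (by exact_mod_cast v.pos) (by exact_mod_cast hub)
    (by exact_mod_cast hvb) h₁ h₂
  have huv : v.num * u.den - u.num * v.den = 1 := by
    rw [hnum, hsum] at h₁; linear_combination h₁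
  have key := sub_add_mul_mul_sub_add_mul_nonneg (Rat.num_nonneg.mpr hu₀) (by positivity)
    (Rat.num_nonneg.mpr hv₀) (by positivity) (similarlyOrdered_of_unimodular hu₀ huv) (e' - e)
  rw [hnum, hsum]
  linarith
end

section
/- Let n be a positive integer and let a_k/b_k and a_l/b_l, with indices k < l, be fractions in the Farey sequence of order n that are not similarly ordered, i.e. (a_l − a_k)(b_l − b_k) < 0. Then a_l ≥ a_k + 1, b_l ≤ b_k − 1, and a_l/b_l − a_k/b_k ≥ (a_k + b_k)/(b_k(b_k − 1)) > 1/n. -/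
/-!
Since `0 ≤ a/b < a'/b'`, the numerator cannot drop while the denominator grows, so a pair that is
not similarly ordered has `a' ≥ a + 1` and `b' ≤ b - 1`. Hence
`a'/b' - a/b ≥ (a + 1)/(b - 1) - a/b = (a + b)/(b(b - 1)) ≥ 1/(b - 1) > 1/b ≥ 1/n`.
-/

namespace Rat

theorem num_add_one_le_and_den_le_sub_one_of_not_similarlyOrdered {q q' : ℚ} (hq : 0 ≤ q)
    (hlt : q < q') (h : ¬ SimilarlyOrdered q q') :
    q.num + 1 ≤ q'.num ∧ (q'.den : ℤ) ≤ q.den - 1 := by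
  have hcross := (Rat.lt_iff q q').mp hlt
  have hnum : 0 ≤ q.num := num_nonneg.mpr hq
  rw [SimilarlyOrdered, not_le] at h
  rcases mul_neg_iff.mp h with ⟨hnum', hden'⟩ | ⟨hnum', hden'⟩
  · omega
  · -- a smaller numerator over a larger denominator would give `q' < q`, as `q.num ≥ 0`
    nlinarith

theorem num_add_den_div_le_sub {q q' : ℚ} (hq : 0 ≤ q) (hnum : q.num + 1 ≤ q'.num)
    (hden : (q'.den : ℤ) ≤ q.den - 1) :
    ((q.num : ℚ) + q.den) / (q.den * (q.den - 1)) ≤ q' - q := by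
  have hnum' : (q.num : ℚ) + 1 ≤ q'.num := by exact_mod_cast hnum
  have hden' : (q'.den : ℚ) ≤ q.den - 1 := by exact_mod_cast hden
  have hnum0 : (0 : ℚ) ≤ q.num := by exact_mod_cast num_nonneg.mpr hq
  have hden'0 : (0 : ℚ) < q'.den := by exact_mod_cast q'.den_pos
  have hden0 : (0 : ℚ) < q.den - 1 := by linarith
  calc ((q.num : ℚ) + q.den) / (q.den * (q.den - 1))
      = (q.num + 1) / (q.den - 1) - q.num / q.den := by
        field_simp
        ring
    _ ≤ q'.num / q'.den - q.num / q.den := by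
        gcongr
        linarith
    _ = q' - q := by rw [num_div_den, num_div_den]

theorem one_div_lt_num_add_den_div {q : ℚ} {n : ℕ} (hq : 0 ≤ q) (hden : 2 ≤ q.den)
    (hdenn : q.den ≤ n) :
    1 / (n : ℚ) < ((q.num : ℚ) + q.den) / (q.den * (q.den - 1)) := by
  have hnum0 : (0 : ℚ) ≤ q.num := by exact_mod_cast num_nonneg.mpr hq
  have hden2 : (2 : ℚ) ≤ q.den := by exact_mod_cast hden
  have hdenn' : (q.den : ℚ) ≤ n := by exact_mod_cast hdenn
  calc 1 / (n : ℚ) ≤ 1 / q.den := by gcongr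
    _ < 1 / (q.den - 1) := by gcongr <;> linarith
    _ = q.den / (q.den * (q.den - 1)) := by field_simp
    _ ≤ ((q.num : ℚ) + q.den) / (q.den * (q.den - 1)) := by gcongr <;> nlinarith

end Rat

theorem fareyList_get_strictMono (n : ℕ) : StrictMono (fareyList n).get :=
  (Finset.sortedLT_sort _).strictMono_get

theorem nonneg_and_den_le_of_mem_fareyList {n : ℕ} {q : ℚ} (hq : q ∈ fareyList n) :
    0 ≤ q ∧ q.den ≤ n := by
  obtain ⟨-, hq0, -, hqn⟩ := Finset.mem_filter.mp ((fareySet n).mem_sort _ |>.mp hq)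
  exact ⟨hq0, hqn⟩

theorem farey_not_similarly_ordered_gap_general (n : ℕ)
    (k l : Fin (fareyList n).length) (hkl : k < l)
    (h : (((fareyList n).get l).num - ((fareyList n).get k).num) *
        ((((fareyList n).get l).den : ℤ) - (((fareyList n).get k).den : ℤ)) < 0) :
    ((fareyList n).get k).num + 1 ≤ ((fareyList n).get l).num ∧
    ((((fareyList n).get l).den : ℤ)) ≤ ((((fareyList n).get k).den : ℤ)) - 1 ∧
    (((((fareyList n).get k).num : ℚ)) + ((((fareyList n).get k).den : ℚ))) /
        (((((fareyList n).get k).den : ℚ)) * (((((fareyList n).get k).den : ℚ)) - 1)) ≤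
      (fareyList n).get l - (fareyList n).get k ∧
    1 / (n : ℚ) < (((((fareyList n).get k).num : ℚ)) + ((((fareyList n).get k).den : ℚ))) /
        (((((fareyList n).get k).den : ℚ)) * (((((fareyList n).get k).den : ℚ)) - 1)) := by
  obtain ⟨hq0, hqn⟩ := nonneg_and_den_le_of_mem_fareyList (List.get_mem _ k)
  obtain ⟨hnum, hden⟩ := Rat.num_add_one_le_and_den_le_sub_one_of_not_similarlyOrdered hq0
    (fareyList_get_strictMono n hkl) (not_le.mpr h)
  have hden2 : 2 ≤ ((fareyList n).get k).den := by
    have := ((fareyList n).get l).den_pos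
    omega
  exact ⟨hnum, hden, Rat.num_add_den_div_le_sub hq0 hnum hden,
    Rat.one_div_lt_num_add_den_div hq0 hden2 hqn⟩

/-- If `a_k/b_k` and `a_l/b_l` (with `k < l`) are fractions in the Farey sequence of order
`n` that are not similarly ordered, then `a_l ≥ a_k + 1`, `b_l ≤ b_k − 1`, and
`a_l/b_l − a_k/b_k ≥ (a_k + b_k)/(b_k(b_k − 1)) > 1/n`. -/
theorem farey_not_similarly_ordered_gap (n : ℕ) (hn : 1 ≤ n)
    (k l : Fin (fareyList n).length) (hkl : k < l)
    (h : (((fareyList n).get l).num - ((fareyList n).get k).num) *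
        ((((fareyList n).get l).den : ℤ) - (((fareyList n).get k).den : ℤ)) < 0) :
    ((fareyList n).get k).num + 1 ≤ ((fareyList n).get l).num ∧
    ((((fareyList n).get l).den : ℤ)) ≤ ((((fareyList n).get k).den : ℤ)) - 1 ∧
    (((((fareyList n).get k).num : ℚ)) + ((((fareyList n).get k).den : ℚ))) /
        (((((fareyList n).get k).den : ℚ)) * (((((fareyList n).get k).den : ℚ)) - 1)) ≤
      (fareyList n).get l - (fareyList n).get k ∧
    1 / (n : ℚ) < (((((fareyList n).get k).num : ℚ)) + ((((fareyList n).get k).den : ℚ))) /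
        (((((fareyList n).get k).den : ℚ)) * (((((fareyList n).get k).den : ℚ)) - 1)) :=
  farey_not_similarly_ordered_gap_general n k l hkl h
end
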